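/- arXiv:1612.02346 — 4 statements merged into one kernel-verified Lean document; each statement's English description precedes it below -/
import Mathlib

section
/- In a category with finite limits, any section inductive object is initial. -/
open CategoryTheory Limits

/-- In a category with finite limits, any section inductive object is initial. -/
theorem section_inductive_is_initial {C : Type*} [Category C] [HasFiniteLimits C] (X : C)
    (hX : ∀ (Y : C) (p : Y ⟶ X), ∃ s : X ⟶ Y, s ≫ p = 𝟙 X) :
    ∀ Y : C, Nonempty (Unique (X ⟶ Y)) := by
  intro Y
  obtain ⟨s, hs⟩ := hX (X ⨯ Y) prod.fst
  refine ⟨⟨⟨s ≫ prod.snd⟩, fun f => ?_⟩⟩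
  obtain ⟨t, ht⟩ := hX (equalizer f (s ≫ prod.snd)) (equalizer.ι f (s ≫ prod.snd))
  calc f = (t ≫ equalizer.ι f (s ≫ prod.snd)) ≫ f := by rw [ht, Category.id_comp]
    _ = t ≫ equalizer.ι f (s ≫ prod.snd) ≫ s ≫ prod.snd := by
        rw [Category.assoc, equalizer.condition]
    _ = s ≫ prod.snd := by rw [← Category.assoc, ht, Category.id_comp]
end

section
/- Let C be a complete category, F, G : C ⇒ Set functors, α : G ⇒ F a natural transformation, and Ḡ : ∫F ⇒ Set the functor of fibres of α (sending (X, x) with x : F X to the fibre of α_X over x). Then Ḡ is continuous relative to the forgetful functor ∫F → C if and only if for every small diagram X : I → C and every limit cone L → X, the square with vertices G L, lim G X, F L, lim F X (horizontal maps the canonical comparison maps, vertical maps induced by α) is a pullback in Set. -/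
open CategoryTheory Limits

universe u v

universe w w₁ w₂

/-- A functor `K` on `A` is continuous relative to `U : A ⥤ B`: it maps cones whose
image under `U` is a limit cone to limit cones in `Set`. -/
def RelativelyContinuous {A : Type w₁} [Category.{u} A] {B : Type w₂} [Category.{u} B]
    (U : A ⥤ B) (K : A ⥤ Type w) : Prop :=
  ∀ (J : Type u) [SmallCategory J] (D : J ⥤ A) (c : Cone D),
    Nonempty (IsLimit (U.mapCone c)) → Nonempty (IsLimit (K.mapCone c))

variable {C : Type v} [Category.{u} C] {F G : C ⥤ Type u}

/-- The functor of fibres of a natural transformation `α : G ⟶ F`, sending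
`(X, x)` with `x : F X` to the fibre of `α_X` over `x`. -/
def fibreFunctor (α : G ⟶ F) : F.Elements ⥤ Type u where
  obj e := {y : G.obj e.1 // α.app e.1 y = e.2}
  map {e e'} φ := TypeCat.ofHom fun y => ⟨G.map φ.val y.1, by
    rw [NatTrans.naturality_apply α φ.val, y.2, φ.2]⟩

/-! For a cone in `∫F` with apex `(L, x)`, the fibre functor produces the cone of fibres of `α`
over the components of `x`. It is a limit exactly when every compatible family in these fibres
lifts uniquely to the fibre over `x`, a condition that only sees the image cone in `C` and `x`.
Asked for every `x : F L`, it is the elementwise pullback property of the square; and every cone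
in `C` together with a point `x : F L` lifts to a cone in `∫F` with apex `(L, x)`. -/

lemma CategoryTheory.Limits.Types.isPullback_iff_existsUnique {P X Y Z : Type u}
    {fst : P ⟶ X} {snd : P ⟶ Y} {f : X ⟶ Z} {g : Y ⟶ Z} (w : fst ≫ f = snd ≫ g) :
    IsPullback fst snd f g ↔ ∀ x y, f x = g y → ∃! p, fst p = x ∧ snd p = y := by
  rw [Types.isPullback_iff]
  constructor
  · rintro ⟨-, inj, ex⟩ x y h
    obtain ⟨p, hp⟩ := ex x y h
    exact ⟨p, hp, fun q hq => inj q p ⟨hq.1.trans hp.1.symm, hq.2.trans hp.2.symm⟩⟩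
  · intro h
    refine ⟨w, fun p q hpq => ?_, fun x y hxy => (h x y hxy).exists⟩
    exact (h _ _ (ConcreteCategory.congr_hom w p)).unique ⟨rfl, rfl⟩ ⟨hpq.1.symm, hpq.2.symm⟩

namespace CategoryTheory.Limits.Cone

variable {J : Type*} [Category J]

def toElementsDiagram {X : J ⥤ C} (c : Cone X) (x : F.obj c.pt) : J ⥤ F.Elements where
  obj j := ⟨X.obj j, F.map (c.π.app j) x⟩
  map φ := ⟨X.map φ, by simp [← Functor.map_comp_apply]⟩

def toElements {X : J ⥤ C} (c : Cone X) (x : F.obj c.pt) : Cone (c.toElementsDiagram x) where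
  pt := ⟨c.pt, x⟩
  π.app j := ⟨c.π.app j, rfl⟩
  π.naturality i j φ := by ext; exact (Category.id_comp _).trans (c.w φ).symm

end CategoryTheory.Limits.Cone

section

variable (α : G ⟶ F)

def UniqueLiftsInFibre {J : Type*} [Category J] {X : J ⥤ C} (c : Cone X) (x : F.obj c.pt) :
    Prop :=
  ∀ s ∈ (X ⋙ G).sections, (∀ j, α.app (X.obj j) (s j) = F.map (c.π.app j) x) →
    ∃! y : G.obj c.pt, (∀ j, G.map (c.π.app j) y = s j) ∧ α.app c.pt y = x

lemma isPullback_limitComparison_iff {J : Type u} [SmallCategory J] {X : J ⥤ C}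
    (c : Cone X) :
    IsPullback (limit.lift (X ⋙ G) (G.mapCone c)) (α.app c.pt)
      (limMap (Functor.whiskerLeft X α)) (limit.lift (X ⋙ F) (F.mapCone c)) ↔
      ∀ x, UniqueLiftsInFibre α c x := by
  have comm : limit.lift (X ⋙ G) (G.mapCone c) ≫ limMap (Functor.whiskerLeft X α) =
      α.app c.pt ≫ limit.lift (X ⋙ F) (F.mapCone c) := by
    ext : 1
    simp
  rw [Types.isPullback_iff_existsUnique comm, forall_comm]
  refine forall_congr' fun x => ?_
  rw [(Types.limitEquivSections (X ⋙ G)).forall_congr_left]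
  simp only [UniqueLiftsInFibre, Types.limit_ext_iff', limMap_π_apply, limit.lift_π_apply,
    Types.limitEquivSections_symm_apply, Subtype.forall]
  rfl

lemma fibreFunctor_mapCone_isLimit_iff {J : Type*} [Category J] {D : J ⥤ F.Elements} (c : Cone D) :
    Nonempty (IsLimit ((fibreFunctor α).mapCone c)) ↔
      UniqueLiftsInFibre α ((CategoryOfElements.π F).mapCone c) c.pt.2 := by
  rw [Types.isLimit_iff]
  constructor
  · intro h s hs hα
    let t : ∀ j, (fibreFunctor α).obj (D.obj j) := fun j => ⟨s j, (hα j).trans (c.π.app j).2⟩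
    obtain ⟨y, hy, huniq⟩ := h t fun f => Subtype.ext (hs f)
    refine ⟨y.1, ⟨fun j => congrArg Subtype.val (hy j), y.2⟩, fun y' ⟨hy', hα'⟩ => ?_⟩
    exact congrArg Subtype.val (huniq ⟨y', hα'⟩ fun j => Subtype.ext (hy' j))
  · intro h t ht
    obtain ⟨y, ⟨hy, hα⟩, huniq⟩ := h (fun j => (t j).1) (fun f => congrArg Subtype.val (ht f))
      (fun j => (t j).2.trans (c.π.app j).2.symm)
    refine ⟨⟨y, hα⟩, fun j => Subtype.ext (hy j), fun y' hy' => Subtype.ext ?_⟩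
    exact huniq y'.1 ⟨fun j => congrArg Subtype.val (hy' j), y'.2⟩

end

theorem fibreFunctor_relativelyContinuous_iff_general (α : G ⟶ F) :
    RelativelyContinuous (CategoryOfElements.π F) (fibreFunctor α) ↔
      ∀ (J : Type u) [SmallCategory J] (X : J ⥤ C) (c : Cone X), IsLimit c →
        IsPullback (limit.lift (X ⋙ G) (G.mapCone c)) (α.app c.pt)
          (limMap (Functor.whiskerLeft X α)) (limit.lift (X ⋙ F) (F.mapCone c)) := by
  constructor
  · intro hcont J _ X c hc
    rw [isPullback_limitComparison_iff]
    intro x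
    -- `(CategoryOfElements.π F).mapCone (c.toElements x)` is `c` by definition.
    exact (fibreFunctor_mapCone_isLimit_iff α (c.toElements x)).1 (hcont J _ _ ⟨hc⟩)
  · intro hpb J _ D c hc
    rw [fibreFunctor_mapCone_isLimit_iff]
    exact (isPullback_limitComparison_iff α _).1 (hpb J _ _ hc.some) c.pt.2

/-- the fibre functor of `α : G ⟶ F` is continuous relative to the
forgetful functor `∫F ⥤ C` iff for every small diagram and limit cone the canonical
square `G L, lim G X, F L, lim F X` is a pullback in `Set`. -/
theorem fibreFunctor_relativelyContinuous_iff [HasLimits C] (α : G ⟶ F) :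
    RelativelyContinuous (CategoryOfElements.π F) (fibreFunctor α) ↔
      ∀ (J : Type u) [SmallCategory J] (X : J ⥤ C) (c : Cone X), IsLimit c →
        IsPullback (limit.lift (X ⋙ G) (G.mapCone c)) (α.app c.pt)
          (limMap (Functor.whiskerLeft X α)) (limit.lift (X ⋙ F) (F.mapCone c)) :=
  fibreFunctor_relativelyContinuous_iff_general α
end

section
/- The equality functor Eq : ∫(Id × Id) ⇒ Set sending (X, x, y) to the set x =_X y is continuous relative to the forgetful functor ∫(Id × Id) → Set. -/
open CategoryTheory Limits

universe u w w₁ w₂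

/-- The functor `Id × Id : Set ⥤ Set`, `X ↦ X × X`. -/
def diagFunctor : Type u ⥤ Type u where
  obj X := X × X
  map f := TypeCat.ofHom fun p => (f p.1, f p.2)

/-- The equality functor `Eq : ∫(Id × Id) ⥤ Set`, `(X, x, y) ↦ (x = y)`. -/
def eqFunctor : diagFunctor.{u}.Elements ⥤ Type where
  obj e := PLift (e.2.1 = e.2.2)
  map {e e'} φ := TypeCat.ofHom fun q =>
    ⟨((congrArg Prod.fst φ.2).symm.trans (congrArg φ.1 q.down)).trans
      (congrArg Prod.snd φ.2)⟩
  map_id := by intros; ext q; exact Subsingleton.elim _ _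
  map_comp := by intros; ext q; exact Subsingleton.elim _ _

/-! The values of `Eq` are subsingletons, so `Eq` sends a cone to a limit cone as soon as its apex
`(X, x, y)` satisfies `x = y` whenever every `(Xⱼ, xⱼ, yⱼ)` of the diagram does. If the underlying
cone of sets is a limit, its projections are jointly injective, and they send `x` and `y` to
`xⱼ = yⱼ`. -/

theorem Types.nonempty_isLimit_of_subsingleton {J : Type w₁} [Category.{w₂} J] {F : J ⥤ Type w}
    (c : Cone F) (hF : ∀ j, Subsingleton (F.obj j)) (hc : Subsingleton c.pt)
    (h : (∀ j, F.obj j) → c.pt) : Nonempty (IsLimit c) :=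
  (Types.isLimit_iff c).2 fun s _ =>
    ⟨h s, fun j => (hF j).elim _ _, fun _ _ => hc.elim _ _⟩

theorem diagFunctor_fst_eq_snd_of_isLimit {J : Type w₁} [Category.{w₂} J]
    {D : J ⥤ diagFunctor.{u}.Elements} {c : Cone D}
    (hc : IsLimit ((CategoryOfElements.π diagFunctor).mapCone c))
    (hD : ∀ j, (D.obj j).2.1 = (D.obj j).2.2) : c.pt.2.1 = c.pt.2.2 :=
  Concrete.isLimit_ext _ hc _ _ fun j => by
    have hπ := (c.π.app j).2
    calc (c.π.app j).1 c.pt.2.1 = (D.obj j).2.1 := congrArg Prod.fst hπ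
      _ = (D.obj j).2.2 := hD j
      _ = (c.π.app j).1 c.pt.2.2 := (congrArg Prod.snd hπ).symm

/-- the equality functor is continuous relative to the forgetful functor
`∫(Id × Id) ⥤ Set`. -/
theorem eqFunctor_relativelyContinuous :
    RelativelyContinuous (CategoryOfElements.π diagFunctor.{u}) eqFunctor.{u} := by
  intro J _ D c ⟨hc⟩
  exact Types.nonempty_isLimit_of_subsingleton _ (fun _ => instSubsingletonPLift)
    instSubsingletonPLift fun s => ⟨diagFunctor_fst_eq_snd_of_isLimit hc fun j => (s j).down⟩
end

section
/- Let C be a complete category, F : C ⇒ Set a functor, G : ∫F ⇒ Set a relatively continuous functor, and l, r : 1 ⇒ G two natural transformations from the terminal functor (global elements of G). Then the assignment (X, x) ↦ (l_{(X,x)} =_{G(X,x)} r_{(X,x)}) extends to a functor ∫F ⇒ Set which is continuous relative to the forgetful functor ∫F → C. -/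
open CategoryTheory Limits

universe u v w w₁ w₂

namespace CategoryTheory.GlobalElement

variable {A : Type w₁} [Category.{u} A] {G : A ⥤ Type w}

lemma map_app (l : (Functor.const A).obj PUnit ⟶ G) {e e' : A} (f : e ⟶ e') :
    G.map f (l.app e PUnit.unit) = l.app e' PUnit.unit :=
  (NatTrans.naturality_apply l f PUnit.unit).symm

def eqLocus (l r : (Functor.const A).obj PUnit ⟶ G) : A ⥤ Type where
  obj e := PLift (l.app e PUnit.unit = r.app e PUnit.unit)
  map f := TypeCat.ofHom fun h => ⟨by rw [← map_app l f, ← map_app r f, h.down]⟩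

/-- Limit cones of sets are jointly injective, and `l`, `r` are compatible with every
projection, so agreement on all legs of a cone forces agreement at its apex. -/
def isLimitEqLocusMapCone (l r : (Functor.const A).obj PUnit ⟶ G)
    {J : Type*} [Category J] {D : J ⥤ A} (c : Cone D) (hc : IsLimit (G.mapCone c)) :
    IsLimit ((eqLocus l r).mapCone c) where
  lift s := TypeCat.ofHom fun x => ⟨Concrete.isLimit_ext _ hc _ _ fun j =>
    (map_app l (c.π.app j)).trans ((s.π.app j x).down.trans (map_app r (c.π.app j)).symm)⟩
  fac _ _ := by ext; rfl
  uniq _ _ _ := by ext; rfl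

theorem relativelyContinuous_eqLocus {B : Type w₂} [Category.{u} B] {U : A ⥤ B}
    (hG : RelativelyContinuous U G) (l r : (Functor.const A).obj PUnit ⟶ G) :
    RelativelyContinuous U (eqLocus l r) :=
  fun J _ D c hc => (hG J D c hc).map (isLimitEqLocusMapCone l r c)

end CategoryTheory.GlobalElement

open CategoryTheory.GlobalElement in
theorem eqG_relativelyContinuous_general {C : Type v} [Category.{u} C]
    (F : C ⥤ Type u) (G : F.Elements ⥤ Type u)
    (hG : RelativelyContinuous (CategoryOfElements.π F) G)
    (l r : (Functor.const F.Elements).obj (PUnit : Type u) ⟶ G) :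
    ∃ K : F.Elements ⥤ Type,
      (∀ e : F.Elements, K.obj e = PLift (l.app e PUnit.unit = r.app e PUnit.unit)) ∧
      RelativelyContinuous (CategoryOfElements.π F) K :=
  ⟨eqLocus l r, fun _ => rfl, relativelyContinuous_eqLocus hG l r⟩

/-- given a complete category `C`, a functor `F : C ⥤ Set`, a relatively
continuous `G : ∫F ⥤ Set`, and global elements `l, r : 1 ⟶ G`, the assignment
`(X, x) ↦ (l_{(X,x)} = r_{(X,x)})` extends to a relatively continuous functor. -/
theorem eqG_relativelyContinuous {C : Type v} [Category.{u} C] [HasLimits C]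
    (F : C ⥤ Type u) (G : F.Elements ⥤ Type u)
    (hG : RelativelyContinuous (CategoryOfElements.π F) G)
    (l r : (Functor.const F.Elements).obj (PUnit : Type u) ⟶ G) :
    ∃ K : F.Elements ⥤ Type,
      (∀ e : F.Elements, K.obj e = PLift (l.app e PUnit.unit = r.app e PUnit.unit)) ∧
      RelativelyContinuous (CategoryOfElements.π F) K :=
  eqG_relativelyContinuous_general F G hG l r
end
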